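/- For the family of unitaries U_n = |0⟩⟨0|⊗I_{n−2}⊗A_1 + |1⟩⟨1|⊗I_{n−2}⊗B_1 + |0⟩⟨1|⊗X_{n−2}⊗C_1 + |1⟩⟨0|⊗X_{n−2}⊗D_1, the DQC1 state ρ_{n+1}(α) has, for any bipartite division putting qubits 1 and n in different parts, the same multiplicative negativity as the corresponding three-qubit state: M(ρ_{n+1}(α)) = M(ρ_3(α)), independent of n ≥ 2. -/

import Mathlib

/-
Relabel the middle qubits by `x ↦ x ⊕ t`, where `t` is the first unpolarised qubit. This turns
every `X_{n−2}` block of `U_n` into an identity block, so up to a permutation of the basis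
`U_n = U₂ ⊗ I`. Since `I` and `X` are invariant under transposition, the same relabelling
identifies the partial transpose of `U_n` (over either part) with that of `U₂`, tensored with `I`.
Hence, after reindexing, the partially transposed DQC1 state is `(4/N) ρ̆₃ ⊗ I_{N/4}`. Each
eigenvalue of the three-qubit partial transpose therefore occurs `N/4` times, with weight `4/N`,
and the two trace norms agree.
-/

open Matrix Kronecker

/-- Trace norm of a Hermitian matrix: sum of the absolute values of its eigenvalues. -/
noncomputable def traceNorm {n : Type*} [Fintype n] [DecidableEq n]
    (A : Matrix n n ℂ) : ℝ :=
  if h : A.IsHermitian then ∑ i, |h.eigenvalues i| else 0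

/-- The DQC1 output state on the special qubit together with `n` qubits split as `A × B`:
`ρ = (1/2N)(I + α(|0⟩⟨1| ⊗ U† + |1⟩⟨0| ⊗ U))`, `N = dim(A × B)`. -/
noncomputable def dqc1State {A B : Type*} [Fintype A] [Fintype B] [DecidableEq A]
    [DecidableEq B] (a : ℝ) (U : Matrix (A × B) (A × B) ℂ) :
    Matrix (Fin 2 × (A × B)) (Fin 2 × (A × B)) ℂ :=
  (2 * (Fintype.card (A × B) : ℂ))⁻¹ •
    (1 + (a : ℂ) • (Matrix.single 0 1 1 ⊗ₖ Uᴴ + Matrix.single 1 0 1 ⊗ₖ U))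

/-- Partial transpose of the DQC1 state over the part `B` (the part not containing the
special qubit). -/
def ptB {A B : Type*} (ρ : Matrix (Fin 2 × (A × B)) (Fin 2 × (A × B)) ℂ) :
    Matrix (Fin 2 × (A × B)) (Fin 2 × (A × B)) ℂ :=
  Matrix.of fun p q => ρ (p.1, (p.2.1, q.2.2)) (q.1, (q.2.1, p.2.2))

/-- Partial transpose of an operator on `A × B` over the `B` factor. -/
def ptU {A B : Type*} (U : Matrix (A × B) (A × B) ℂ) : Matrix (A × B) (A × B) ℂ :=
  Matrix.of fun p q => U (p.1, q.2) (q.1, p.2)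

/-- Partial transpose of the DQC1 state over the part `A` (grouping the special qubit with
the `B` factor instead). -/
def ptA {A B : Type*} (ρ : Matrix (Fin 2 × (A × B)) (Fin 2 × (A × B)) ℂ) :
    Matrix (Fin 2 × (A × B)) (Fin 2 × (A × B)) ℂ :=
  Matrix.of fun p q => ρ (p.1, (q.2.1, p.2.2)) (q.1, (p.2.1, q.2.2))

/-- The two-qubit unitary `U₂ = [[A₁, C₁],[D₁, B₁]]` built from `2×2` blocks. -/
noncomputable def U2gen (A1 B1 C1 D1 : Matrix (Fin 2) (Fin 2) ℂ) :
    Matrix (Fin 2 × Fin 2) (Fin 2 × Fin 2) ℂ :=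
  Matrix.single 0 0 1 ⊗ₖ A1 + Matrix.single 0 1 1 ⊗ₖ C1 +
  Matrix.single 1 0 1 ⊗ₖ D1 + Matrix.single 1 1 1 ⊗ₖ B1

/-- The `n`-qubit unitary
`U_n = |0⟩⟨0|⊗I_{n−2}⊗A₁ + |1⟩⟨1|⊗I_{n−2}⊗B₁ + |0⟩⟨1|⊗X_{n−2}⊗C₁ + |1⟩⟨0|⊗X_{n−2}⊗D₁`,
with the `n−2` middle qubits split into two groups of sizes `m₁` and `m₂` (so that any
bipartite division separating the first and last unpolarized qubits is realized). -/
noncomputable def Ufam (m₁ m₂ : ℕ) (A1 B1 C1 D1 : Matrix (Fin 2) (Fin 2) ℂ) :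
    Matrix ((Fin 2 × (Fin m₁ → Fin 2)) × ((Fin m₂ → Fin 2) × Fin 2))
           ((Fin 2 × (Fin m₁ → Fin 2)) × ((Fin m₂ → Fin 2) × Fin 2)) ℂ :=
  Matrix.of fun p q =>
    if p.1.1 = 0 ∧ q.1.1 = 0 then
      (if p.1.2 = q.1.2 ∧ p.2.1 = q.2.1 then A1 p.2.2 q.2.2 else 0)
    else if p.1.1 = 0 ∧ q.1.1 = 1 then
      (if (∀ i, q.1.2 i ≠ p.1.2 i) ∧ (∀ i, q.2.1 i ≠ p.2.1 i) then C1 p.2.2 q.2.2 else 0)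
    else if p.1.1 = 1 ∧ q.1.1 = 0 then
      (if (∀ i, q.1.2 i ≠ p.1.2 i) ∧ (∀ i, q.2.1 i ≠ p.2.1 i) then D1 p.2.2 q.2.2 else 0)
    else
      (if p.1.2 = q.1.2 ∧ p.2.1 = q.2.1 then B1 p.2.2 q.2.2 else 0)

lemma Matrix.IsHermitian.kronecker {R n m : Type*} [CommRing R] [StarRing R] {A : Matrix n n R}
    {B : Matrix m m R} (hA : A.IsHermitian) (hB : B.IsHermitian) : (A ⊗ₖ B).IsHermitian := by
  rw [IsHermitian, conjTranspose_kronecker, hA.eq, hB.eq]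

section Charpoly

open Polynomial

variable {R n m : Type*} [CommRing R] [Fintype n] [DecidableEq n] [Fintype m] [DecidableEq m]

lemma charmatrix_blockDiagonal (M : m → Matrix n n R) :
    charmatrix (blockDiagonal M) = blockDiagonal fun k => charmatrix (M k) := by
  ext ⟨i, k⟩ ⟨j, k'⟩
  simp only [charmatrix_apply, blockDiagonal_apply, diagonal_apply, Prod.mk.injEq]
  split_ifs <;> simp_all

lemma charpoly_kronecker_one (A : Matrix n n R) :
    (A ⊗ₖ (1 : Matrix m m R)).charpoly = A.charpoly ^ Fintype.card m := by
  rw [kronecker_one, charpoly, charmatrix_blockDiagonal, det_blockDiagonal, Finset.prod_const,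
    Finset.card_univ, charpoly]

lemma charpoly_ofReal_smul {A : Matrix n n ℂ} (hA : A.IsHermitian) (r : ℝ) :
    ((r : ℂ) • A).charpoly = ∏ i, (X - C ((r * hA.eigenvalues i : ℝ) : ℂ)) := by
  conv_lhs => rw [hA.spectral_theorem, Unitary.conjStarAlgAut_apply, ← Matrix.smul_mul,
    ← Matrix.mul_smul, charpoly_mul_comm, ← mul_assoc]
  simp [← diagonal_smul, charpoly_diagonal, Function.comp_def]

end Charpoly

section TraceNorm

open Polynomial

variable {n m : Type*} [Fintype n] [DecidableEq n] [Fintype m] [DecidableEq m]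

lemma traceNorm_eq_sum_roots {A : Matrix n n ℂ} (hA : A.IsHermitian) :
    traceNorm A = (A.charpoly.roots.map fun z => |z.re|).sum := by
  rw [traceNorm, dif_pos hA, hA.roots_charpoly_eq_eigenvalues, Multiset.map_map]
  rfl

lemma traceNorm_submatrix_equiv {l : Type*} [Fintype l] [DecidableEq l] {A : Matrix n n ℂ}
    (hA : A.IsHermitian) (e : l ≃ n) : traceNorm (A.submatrix e e) = traceNorm A := by
  rw [traceNorm_eq_sum_roots (hA.submatrix e), traceNorm_eq_sum_roots hA,
    ← charpoly_reindex e.symm A]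
  rfl

lemma traceNorm_kronecker_one {A : Matrix n n ℂ} (hA : A.IsHermitian) :
    traceNorm (A ⊗ₖ (1 : Matrix m m ℂ)) = Fintype.card m * traceNorm A := by
  rw [traceNorm_eq_sum_roots (hA.kronecker isHermitian_one), traceNorm_eq_sum_roots hA,
    charpoly_kronecker_one, roots_pow, Multiset.map_nsmul, Multiset.sum_nsmul, nsmul_eq_mul]

lemma traceNorm_ofReal_smul {A : Matrix n n ℂ} (hA : A.IsHermitian) (r : ℝ) :
    traceNorm ((r : ℂ) • A) = |r| * traceNorm A := by
  rw [traceNorm_eq_sum_roots (hA.smul (Complex.conj_ofReal r)), charpoly_ofReal_smul hA,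
    roots_prod _ _ (Finset.prod_ne_zero_iff.2 fun i _ => X_sub_C_ne_zero _)]
  simp only [roots_X_sub_C, Multiset.bind_singleton, Multiset.map_map]
  rw [traceNorm, dif_pos hA, Finset.mul_sum]
  simp [abs_mul]

end TraceNorm

def dqc1Form {ι : Type*} [DecidableEq ι] (a : ℝ) (V : Matrix ι ι ℂ) :
    Matrix (Fin 2 × ι) (Fin 2 × ι) ℂ :=
  1 + (a : ℂ) • (single 0 1 1 ⊗ₖ Vᴴ + single 1 0 1 ⊗ₖ V)

lemma isHermitian_dqc1Form {ι : Type*} [DecidableEq ι] (a : ℝ) (V : Matrix ι ι ℂ) :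
    (dqc1Form a V).IsHermitian := by
  simp [dqc1Form, IsHermitian, conjTranspose_kronecker, add_comm]

section PartialTranspose

variable {A B : Type*}

lemma ptU_conjTranspose (M : Matrix (A × B) (A × B) ℂ) : ptU Mᴴ = (ptU M)ᴴ := rfl

section Linear

variable (M N : Matrix (Fin 2 × (A × B)) (Fin 2 × (A × B)) ℂ) (c : ℂ)
  (S : Matrix (Fin 2) (Fin 2) ℂ) (U : Matrix (A × B) (A × B) ℂ)

lemma ptB_add : ptB (M + N) = ptB M + ptB N := rfl
lemma ptB_smul : ptB (c • M) = c • ptB M := rfl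
lemma ptB_kronecker : ptB (S ⊗ₖ U) = S ⊗ₖ ptU U := rfl
lemma ptA_add : ptA (M + N) = ptA M + ptA N := rfl
lemma ptA_smul : ptA (c • M) = c • ptA M := rfl
lemma ptA_kronecker : ptA (S ⊗ₖ U) = S ⊗ₖ (ptU U)ᵀ := rfl

end Linear

variable [DecidableEq A] [DecidableEq B]

lemma ptB_one : ptB (1 : Matrix (Fin 2 × (A × B)) (Fin 2 × (A × B)) ℂ) = 1 := by
  ext ⟨s, a, b⟩ ⟨t, a', b'⟩
  simp [ptB, one_apply, eq_comm]

lemma ptA_one : ptA (1 : Matrix (Fin 2 × (A × B)) (Fin 2 × (A × B)) ℂ) = 1 := by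
  ext ⟨s, a, b⟩ ⟨t, a', b'⟩
  simp [ptA, one_apply, eq_comm]

lemma ptB_dqc1Form (a : ℝ) (U : Matrix (A × B) (A × B) ℂ) :
    ptB (dqc1Form a U) = dqc1Form a (ptU U) := by
  simp only [dqc1Form, ptB_add, ptB_smul, ptB_one, ptB_kronecker, ptU_conjTranspose]

lemma ptA_dqc1Form (a : ℝ) (U : Matrix (A × B) (A × B) ℂ) :
    ptA (dqc1Form a U) = dqc1Form a (ptU U)ᵀ := by
  simp only [dqc1Form, ptA_add, ptA_smul, ptA_one, ptA_kronecker, ptU_conjTranspose,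
    ← conjTranspose_transpose_eq_transpose_conjTranspose]

variable [Fintype A] [Fintype B]

lemma dqc1State_eq_smul (a : ℝ) (U : Matrix (A × B) (A × B) ℂ) :
    dqc1State a U = (((2 * Fintype.card (A × B) : ℝ)⁻¹ : ℝ) : ℂ) • dqc1Form a U := by
  rw [dqc1State, dqc1Form]
  push_cast
  rfl

lemma traceNorm_ptB_dqc1State (a : ℝ) (U : Matrix (A × B) (A × B) ℂ) :
    traceNorm (ptB (dqc1State a U)) =
      (2 * Fintype.card (A × B) : ℝ)⁻¹ * traceNorm (dqc1Form a (ptU U)) := by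
  rw [dqc1State_eq_smul, ptB_smul, ptB_dqc1Form,
    traceNorm_ofReal_smul (isHermitian_dqc1Form a _), abs_of_nonneg (by positivity)]

lemma traceNorm_ptA_dqc1State (a : ℝ) (U : Matrix (A × B) (A × B) ℂ) :
    traceNorm (ptA (dqc1State a U)) =
      (2 * Fintype.card (A × B) : ℝ)⁻¹ * traceNorm (dqc1Form a (ptU U)ᵀ) := by
  rw [dqc1State_eq_smul, ptA_smul, ptA_dqc1Form,
    traceNorm_ofReal_smul (isHermitian_dqc1Form a _), abs_of_nonneg (by positivity)]

end PartialTranspose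

section KroneckerOne

variable {K L n m : Type*} [DecidableEq m]

def prodReassoc (K : Type*) (e : L ≃ n × m) : K × L ≃ (K × n) × m :=
  (Equiv.prodCongr (Equiv.refl K) e).trans (Equiv.prodAssoc K n m).symm

lemma kronecker_submatrix_kronecker_one (S : Matrix K K ℂ) (V : Matrix n n ℂ) (e : L ≃ n × m) :
    S ⊗ₖ (V ⊗ₖ (1 : Matrix m m ℂ)).submatrix e e =
      ((S ⊗ₖ V) ⊗ₖ (1 : Matrix m m ℂ)).submatrix (prodReassoc K e) (prodReassoc K e) := by
  ext ⟨s, p⟩ ⟨t, q⟩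
  simp [prodReassoc, mul_assoc]

lemma transpose_submatrix_kronecker_one (V : Matrix n n ℂ) (e : L ≃ n × m) :
    ((V ⊗ₖ (1 : Matrix m m ℂ)).submatrix e e)ᵀ = (Vᵀ ⊗ₖ (1 : Matrix m m ℂ)).submatrix e e := by
  rw [transpose_submatrix, ← kroneckerMap_transpose, transpose_one]

variable [DecidableEq L] [DecidableEq n]

lemma dqc1Form_submatrix_kronecker_one (a : ℝ) (V : Matrix n n ℂ) (e : L ≃ n × m) :
    dqc1Form a ((V ⊗ₖ (1 : Matrix m m ℂ)).submatrix e e) =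
      (dqc1Form a V ⊗ₖ (1 : Matrix m m ℂ)).submatrix (prodReassoc _ e) (prodReassoc _ e) := by
  rw [dqc1Form, dqc1Form, conjTranspose_submatrix, conjTranspose_kronecker, conjTranspose_one,
    kronecker_submatrix_kronecker_one, kronecker_submatrix_kronecker_one, add_kronecker,
    smul_kronecker, add_kronecker, one_kronecker_one]
  conv_lhs => rw [← submatrix_one_equiv (prodReassoc _ e)]
  rfl

variable [Fintype n] [Fintype m] [Fintype L]

lemma traceNorm_dqc1Form_submatrix_kronecker_one (a : ℝ) (V : Matrix n n ℂ) (e : L ≃ n × m) :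
    traceNorm (dqc1Form a ((V ⊗ₖ (1 : Matrix m m ℂ)).submatrix e e)) =
      Fintype.card m * traceNorm (dqc1Form a V) := by
  rw [dqc1Form_submatrix_kronecker_one,
    traceNorm_submatrix_equiv ((isHermitian_dqc1Form a V).kronecker isHermitian_one),
    traceNorm_kronecker_one (isHermitian_dqc1Form a V)]

end KroneckerOne

section BitStrings

variable {ι : Type*}

def xorAll (t : Fin 2) (x : ι → Fin 2) : ι → Fin 2 := fun i => x i + t

@[simp] lemma xorAll_zero (x : ι → Fin 2) : xorAll 0 x = x := by
  funext i
  simp [xorAll]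

lemma xorAll_involutive (t : Fin 2) : Function.Involutive (xorAll (ι := ι) t) := by
  intro x
  funext i
  have h : ∀ c : Fin 2, c + c = 0 := by decide
  rw [xorAll, xorAll, add_assoc, h, add_zero]

@[simp] lemma xorAll_xorAll (t : Fin 2) (x : ι → Fin 2) : xorAll t (xorAll t x) = x :=
  xorAll_involutive t x

lemma xorAll_eq_xorAll_comm (t t' : Fin 2) (x y : ι → Fin 2) :
    xorAll t x = xorAll t' y ↔ xorAll t y = xorAll t' x := by
  have h : ∀ a b c d : Fin 2, a + c = b + d ↔ b + c = a + d := by decide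
  simp only [funext_iff, xorAll, h]

lemma forall_ne_iff_eq_xorAll_one (x y : ι → Fin 2) : (∀ i, x i ≠ y i) ↔ y = xorAll 1 x := by
  have h : ∀ a b : Fin 2, a ≠ b ↔ b = a + 1 := by decide
  simp only [funext_iff, xorAll, h]

def bitShift (ι₁ ι₂ : Type*) :
    (Fin 2 × (ι₁ → Fin 2)) × ((ι₂ → Fin 2) × Fin 2) ≃
      (Fin 2 × Fin 2) × ((ι₁ → Fin 2) × (ι₂ → Fin 2)) where
  toFun p := ((p.1.1, p.2.2), (xorAll p.1.1 p.1.2, xorAll p.1.1 p.2.1))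
  invFun r := ((r.1.1, xorAll r.1.1 r.2.1), (xorAll r.1.1 r.2.2, r.1.2))
  left_inv p := by simp
  right_inv r := by simp

lemma Ufam_eq_submatrix_bitShift (m₁ m₂ : ℕ) (A1 B1 C1 D1 : Matrix (Fin 2) (Fin 2) ℂ) :
    Ufam m₁ m₂ A1 B1 C1 D1 =
      (U2gen A1 B1 C1 D1 ⊗ₖ 1).submatrix (bitShift (Fin m₁) (Fin m₂)) (bitShift _ _) := by
  ext ⟨⟨t, x⟩, ⟨y, u⟩⟩ ⟨⟨t', x'⟩, ⟨y', u'⟩⟩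
  fin_cases t <;> fin_cases t' <;>
    simp [Ufam, U2gen, bitShift, one_apply, single, forall_ne_iff_eq_xorAll_one,
      (xorAll_involutive _).eq_iff]

/-- This is where the transpose-invariance of `I` and `X` enters. -/
lemma ptU_submatrix_bitShift {ι₁ ι₂ : Type*} [DecidableEq (ι₁ → Fin 2)]
    [DecidableEq (ι₂ → Fin 2)] (V : Matrix (Fin 2 × Fin 2) (Fin 2 × Fin 2) ℂ) :
    ptU ((V ⊗ₖ 1).submatrix (bitShift ι₁ ι₂) (bitShift ι₁ ι₂)) =
      (ptU V ⊗ₖ 1).submatrix (bitShift ι₁ ι₂) (bitShift ι₁ ι₂) := by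
  ext ⟨⟨t, x⟩, ⟨y, u⟩⟩ ⟨⟨t', x'⟩, ⟨y', u'⟩⟩
  simp [ptU, bitShift, one_apply, xorAll_eq_xorAll_comm t t' y' y]

end BitStrings

theorem stmt_15_general (m₁ m₂ : ℕ) (A1 B1 C1 D1 : Matrix (Fin 2) (Fin 2) ℂ) (a : ℝ) :
    traceNorm (ptB (dqc1State a (Ufam m₁ m₂ A1 B1 C1 D1))) =
      traceNorm (ptB (dqc1State a (U2gen A1 B1 C1 D1))) ∧
    traceNorm (ptA (dqc1State a (Ufam m₁ m₂ A1 B1 C1 D1))) =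
      traceNorm (ptA (dqc1State a (U2gen A1 B1 C1 D1))) := by
  have hscale : ∀ T : ℝ,
      (2 * Fintype.card ((Fin 2 × (Fin m₁ → Fin 2)) × ((Fin m₂ → Fin 2) × Fin 2)) : ℝ)⁻¹ *
        (Fintype.card ((Fin m₁ → Fin 2) × (Fin m₂ → Fin 2)) * T) =
      (2 * Fintype.card (Fin 2 × Fin 2) : ℝ)⁻¹ * T := by
    intro T
    simp only [Fintype.card_prod, Fintype.card_fun, Fintype.card_fin]
    push_cast
    field_simp
    ring
  constructor
  · rw [traceNorm_ptB_dqc1State, traceNorm_ptB_dqc1State, Ufam_eq_submatrix_bitShift,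
      ptU_submatrix_bitShift, traceNorm_dqc1Form_submatrix_kronecker_one, hscale]
  · rw [traceNorm_ptA_dqc1State, traceNorm_ptA_dqc1State, Ufam_eq_submatrix_bitShift,
      ptU_submatrix_bitShift, transpose_submatrix_kronecker_one,
      traceNorm_dqc1Form_submatrix_kronecker_one, hscale]

/-- For the family of unitaries `U_n` built from a two-qubit unitary `U₂`, the DQC1 state
has, for any bipartite division putting the first and last unpolarized qubits in different
parts, the same multiplicative negativity as the corresponding three-qubit state:
`M(ρ_{n+1}(α)) = M(ρ₃(α))`, independent of `n ≥ 2`. -/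
theorem stmt_15 (m₁ m₂ : ℕ) (A1 B1 C1 D1 : Matrix (Fin 2) (Fin 2) ℂ)
    (hU2 : (U2gen A1 B1 C1 D1)ᴴ * U2gen A1 B1 C1 D1 = 1) (a : ℝ) :
    traceNorm (ptB (dqc1State a (Ufam m₁ m₂ A1 B1 C1 D1))) =
      traceNorm (ptB (dqc1State a (U2gen A1 B1 C1 D1))) ∧
    traceNorm (ptA (dqc1State a (Ufam m₁ m₂ A1 B1 C1 D1))) =
      traceNorm (ptA (dqc1State a (U2gen A1 B1 C1 D1))) :=
  stmt_15_general m₁ m₂ A1 B1 C1 D1 a
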